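/- Let C be a finite tensor category over an algebraically closed field k and F : C → C a right exact k-linear strong monoidal functor. Then the group Aut_⊗(F) of monoidal natural automorphisms of F is finite. In particular, Aut_⊗(id_C) is finite. -/

import Mathlib

open CategoryTheory CategoryTheory.MonoidalCategory CategoryTheory.Limits

attribute [local instance] CategoryTheory.Abelian.hasFiniteBiproducts

/-!
A monoidal natural transformation `τ : F ⟶ F` is "grouplike":
`τ_X ⊗ τ_Y = μ ≫ τ_{X ⊗ Y} ≫ δ`. In a rigid category with simple unit over an algebraically
closed field, a relation `∑ aᵢ ⊗ bᵢ = 0` with linearly independent `aᵢ` forces every `bᵢ = 0`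
(after passing to mates `𝟙 ⟶ ᘁA ⊗ B`, the `aᵢ` assemble into a monomorphism `𝟙^{⊕n} ⟶ ᘁA ⊗ B`
by Schur's lemma). Dedekind's argument for characters then shows that distinct monoidal
transformations are linearly independent in `End(F)`. As every object is a quotient of some
`P^{⊕n}` and `F` preserves epimorphisms, `End(F)` embeds into the finite-dimensional
`End(F P)`, so there are only finitely many monoidal transformations.
-/

namespace CategoryTheory

section Schur

variable {C : Type*} [Category C] [Abelian C] [∀ X : C, IsArtinianObject X]

lemma exists_ne_zero_comp_eq_zero_of_not_mono {ι : Type*} [Fintype ι] {S M : C} [Simple S]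
    {e : (⨁ fun _ : ι => S) ⟶ M} (he : ¬Mono e) :
    ∃ φ : S ⟶ ⨁ fun _ : ι => S, φ ≠ 0 ∧ φ ≫ e = 0 := by
  have hK : ¬IsZero (kernel e) := fun h => he (Preadditive.mono_of_kernel_zero (h.eq_of_src _ _))
  set ψ := simpleSubobjectArrow hK ≫ kernel.ι e
  obtain ⟨j, hj⟩ : ∃ j, ψ ≫ biproduct.π _ j ≠ 0 := by
    by_contra! h
    have : ψ = 0 := biproduct.hom_ext _ _ fun j => by simp [h j]
    exact (Simple.not_isZero (simpleSubobject hK)) (IsZero.of_mono_eq_zero ψ this)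
  have : IsIso (ψ ≫ biproduct.π _ j) := isIso_of_hom_simple hj
  refine ⟨inv (ψ ≫ biproduct.π _ j) ≫ ψ, fun h => id_nonzero S ?_, by simp [ψ]⟩
  simpa using congrArg (· ≫ biproduct.π _ j) h

variable (k : Type*) [Field k] [IsAlgClosed k] [Linear k C]
  [∀ X Y : C, FiniteDimensional k (X ⟶ Y)]

lemma mono_biproduct_desc_of_linearIndependent {ι : Type*} [Fintype ι] {S M : C} [Simple S]
    {u : ι → (S ⟶ M)} (hu : LinearIndependent k u) : Mono (biproduct.desc u) := by
  classical
  by_contra he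
  obtain ⟨φ, hφ, hφu⟩ := exists_ne_zero_comp_eq_zero_of_not_mono he
  choose c hc using fun j => endomorphism_simple_eq_smul_id k (φ ≫ biproduct.π _ j)
  have hφc : φ = ∑ j, c j • biproduct.ι _ j := biproduct.hom_ext _ _ fun j => by
    simp [← hc, Preadditive.sum_comp, biproduct.ι_π]
  have hc0 : c = 0 := funext <| Fintype.linearIndependent_iff.mp hu c <| by
    simpa [hφc, Preadditive.sum_comp] using hφu
  exact hφ (by simp [hφc, hc0])

end Schur

section Peel

variable (k : Type*) [Field k] {C : Type*} [Category C]

section Linear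

variable [Preadditive C] [Linear k C] [MonoidalCategory C] [MonoidalPreadditive C]
  [MonoidalLinear k C]

def tensorHomBilin (W X Y Z : C) : (W ⟶ X) →ₗ[k] (Y ⟶ Z) →ₗ[k] (W ⊗ Y ⟶ X ⊗ Z) :=
  LinearMap.mk₂ k (· ⊗ₘ ·) MonoidalPreadditive.add_tensor
    (fun _ _ _ => by simp [MonoidalCategory.tensorHom_def]) MonoidalPreadditive.tensor_add
    (fun _ _ _ => by simp [MonoidalCategory.tensorHom_def])

variable [LeftRigidCategory C]

@[simps]
def coevaluationComp (A B : C) : (A ⟶ B) →ₗ[k] (𝟙_ C ⟶ (ᘁA) ⊗ B) where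
  toFun f := η_ (ᘁA) A ≫ (ᘁA) ◁ f
  map_add' f g := by simp
  map_smul' r f := by simp

lemma coevaluationComp_injective (A B : C) : Function.Injective (coevaluationComp k A B) := by
  have (f : A ⟶ B) :
      coevaluationComp k A B f = tensorLeftHomEquiv (𝟙_ C) (ᘁA) A B ((ρ_ A).hom ≫ f) := by
    simp [tensorLeftHomEquiv, unitors_inv_equal]
  intro f g h
  rw [this, this] at h
  simpa using (tensorLeftHomEquiv _ _ _ _).injective h

lemma coevaluationComp_tensorHom {A B X Y : C} (f : A ⟶ B) (g : X ⟶ Y) :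
    coevaluationComp k A B f ⊗ₘ g =
      η_ (ᘁA) A ▷ X ≫ (α_ _ _ _).hom ≫ (ᘁA) ◁ (f ⊗ₘ g) ≫ (α_ _ _ _).inv := by
  simp [MonoidalCategory.tensorHom_def]

end Linear

variable [Abelian C] [Linear k C] [MonoidalCategory C] [MonoidalPreadditive C]
  [LeftRigidCategory C] [IsAlgClosed k] [Simple (𝟙_ C)]
  [∀ X : C, IsArtinianObject X] [∀ X Y : C, FiniteDimensional k (X ⟶ Y)]

lemma eq_zero_of_sum_unit_tensorHom_eq_zero {ι : Type*} [Fintype ι] {M X Y : C}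
    {u : ι → (𝟙_ C ⟶ M)} (hu : LinearIndependent k u) {b : ι → (X ⟶ Y)}
    (h : ∑ i, u i ⊗ₘ b i = 0) (i : ι) : b i = 0 := by
  have : Mono (biproduct.desc u) := mono_biproduct_desc_of_linearIndependent k hu
  have : (tensorRight Y).IsRightAdjoint := (tensorRightAdjunction (ᘁY) Y).isRightAdjoint
  have : Mono (biproduct.desc u ▷ Y) := (tensorRight Y).map_mono (biproduct.desc u)
  have hι : ∑ i, biproduct.ι (fun _ => 𝟙_ C) i ⊗ₘ b i = 0 := by
    rw [← cancel_mono (biproduct.desc u ▷ Y), zero_comp, ← h, Preadditive.sum_comp]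
    simp only [← tensorHom_id, tensorHom_comp_tensorHom, Category.comp_id, biproduct.ι_desc]
  have := congrArg (· ≫ biproduct.π (fun _ => 𝟙_ C) i ▷ Y) hι
  simp only [← tensorHom_id, Preadditive.sum_comp, tensorHom_comp_tensorHom, Category.comp_id]
    at this
  rw [Finset.sum_eq_single i (fun j _ hj => by simp [biproduct.ι_π_ne _ hj]) (by simp)] at this
  simpa using this

lemma eq_zero_of_sum_tensorHom_eq_zero [MonoidalLinear k C] {ι : Type*} [Fintype ι] {A B X Y : C}
    {a : ι → (A ⟶ B)} (ha : LinearIndependent k a) {b : ι → (X ⟶ Y)}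
    (h : ∑ i, a i ⊗ₘ b i = 0) (i : ι) : b i = 0 := by
  refine eq_zero_of_sum_unit_tensorHom_eq_zero k
    (ha.map' _ (LinearMap.ker_eq_bot.mpr (coevaluationComp_injective k A B))) ?_ i
  simp only [Function.comp_apply, coevaluationComp_tensorHom, ← Preadditive.comp_sum,
    ← Preadditive.sum_comp, ← whiskerLeft_sum, h]
  simp

end Peel

section Generator

variable {C D : Type*} [Category C] [Preadditive C] [HasFiniteBiproducts C]
  [Category D] [Preadditive D] {F G : C ⥤ D} [F.Additive] [F.PreservesEpimorphisms]

lemma NatTrans.eq_zero_of_app_eq_zero {P : C}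
    (hP : ∀ X : C, ∃ (n : ℕ) (q : (⨁ fun _ : Fin n => P) ⟶ X), Epi q)
    {g : F ⟶ G} (hg : g.app P = 0) : g = 0 := by
  ext X
  obtain ⟨n, q, hq⟩ := hP X
  have hpow : g.app (⨁ fun _ : Fin n => P) = 0 := by
    rw [← Category.id_comp (g.app _), ← F.map_id, ← biproduct.total, F.map_sum,
      Preadditive.sum_comp]
    simp [hg]
  rw [← cancel_epi (F.map q), NatTrans.naturality, hpow]
  simp

lemma NatTrans.appLinearMap_injective {k : Type*} [Semiring k] [Linear k D] {P : C}
    (hP : ∀ X : C, ∃ (n : ℕ) (q : (⨁ fun _ : Fin n => P) ⟶ X), Epi q) :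
    Function.Injective (NatTrans.appLinearMap (R := k) (F := F) (G := G) P) :=
  (injective_iff_map_eq_zero _).mpr fun _ => NatTrans.eq_zero_of_app_eq_zero hP

lemma NatTrans.finiteDimensional (k : Type*) [DivisionRing k] [Linear k D] {P : C}
    (hP : ∀ X : C, ∃ (n : ℕ) (q : (⨁ fun _ : Fin n => P) ⟶ X), Epi q)
    [FiniteDimensional k (F.obj P ⟶ G.obj P)] : FiniteDimensional k (F ⟶ G) :=
  FiniteDimensional.of_injective _ (NatTrans.appLinearMap_injective (k := k) hP)

end Generator

section Monoidal

open Functor.LaxMonoidal Functor.OplaxMonoidal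

variable {C D : Type*} [Category C] [MonoidalCategory C] [Category D] [MonoidalCategory D]

lemma NatTrans.IsMonoidal.tensorHom_app {F G : C ⥤ D} [F.Monoidal] [G.Monoidal] {τ : F ⟶ G}
    (hτ : NatTrans.IsMonoidal τ) (X Y : C) :
    τ.app X ⊗ₘ τ.app Y = μ F X Y ≫ τ.app (X ⊗ Y) ≫ δ G X Y := by
  simp [hτ.tensor_assoc]

lemma NatTrans.IsMonoidal.ne_zero [Preadditive D] [Simple (𝟙_ D)] {F G : C ⥤ D} [F.Monoidal]
    [G.Monoidal] {τ : F ⟶ G} (hτ : NatTrans.IsMonoidal τ) : τ ≠ 0 := by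
  rintro rfl
  apply id_nonzero (𝟙_ D)
  rw [← Functor.Monoidal.ε_η G, ← hτ.unit]
  simp

end Monoidal

section Grouplike

open Functor.LaxMonoidal Functor.OplaxMonoidal

variable (k : Type*) [Field k] [IsAlgClosed k]
  {C : Type*} [Category C] [MonoidalCategory C] [Preadditive C] [HasFiniteBiproducts C]
  {D : Type*} [Category D] [Abelian D] [Linear k D] [MonoidalCategory D] [MonoidalPreadditive D]
  [MonoidalLinear k D] [LeftRigidCategory D] [Simple (𝟙_ D)]
  [∀ X : D, IsArtinianObject X] [∀ X Y : D, FiniteDimensional k (X ⟶ Y)]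
  {F : C ⥤ D} [F.Monoidal] [F.Additive] [F.PreservesEpimorphisms]

lemma NatTrans.IsMonoidal.smul_sub_eq_zero_of_sum_eq {P : C}
    (hP : ∀ X : C, ∃ (n : ℕ) (q : (⨁ fun _ : Fin n => P) ⟶ X), Epi q)
    {ι : Type*} [Fintype ι] {h : ι → (F ⟶ F)} (hh : ∀ i, NatTrans.IsMonoidal (h i))
    (hli : LinearIndependent k h) {g : F ⟶ F} (hg : NatTrans.IsMonoidal g) {c : ι → k}
    (hgc : ∑ i, c i • h i = g) (i : ι) : c i • (g - h i) = 0 := by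
  ext Y
  rw [NatTrans.app_zero]
  refine eq_zero_of_sum_tensorHom_eq_zero k (b := fun i => (c i • (g - h i)).app Y)
    (hli.map' _ (LinearMap.ker_eq_bot.mpr (NatTrans.appLinearMap_injective hP))) ?_ i
  let Φ := (tensorHomBilin k (F.obj P) (F.obj P) (F.obj Y) (F.obj Y)).compl₁₂
    (NatTrans.appLinearMap (F := F) (G := F) P) (NatTrans.appLinearMap Y)
  have hΦ (a b : F ⟶ F) : Φ a b = a.app P ⊗ₘ b.app Y := rfl
  calc ∑ i, (h i).app P ⊗ₘ (c i • (g - h i)).app Y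
      = ∑ i, Φ (h i) (c i • (g - h i)) := rfl
    _ = ∑ i, c i • Φ (h i) g - ∑ i, c i • Φ (h i) (h i) := by
        simp only [map_smul, map_sub, smul_sub, Finset.sum_sub_distrib]
    _ = Φ (∑ i, c i • h i) g - μ F P Y ≫ (∑ i, c i • h i).app (P ⊗ Y) ≫ δ F P Y := by
        simp only [map_sum, map_smul, LinearMap.sum_apply, LinearMap.smul_apply, hΦ,
          (hh _).tensorHom_app, NatTrans.app_sum, NatTrans.app_smul, Preadditive.sum_comp,
          Preadditive.comp_sum, Linear.smul_comp, Linear.comp_smul]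
    _ = 0 := by rw [hgc, hΦ, hg.tensorHom_app, sub_self]

lemma notMem_span_of_isMonoidal {P : C}
    (hP : ∀ X : C, ∃ (n : ℕ) (q : (⨁ fun _ : Fin n => P) ⟶ X), Epi q)
    {s : Set (F ⟶ F)} (hs : s.Finite) (hsM : ∀ h ∈ s, NatTrans.IsMonoidal h)
    (hli : LinearIndepOn k id s) {g : F ⟶ F} (hg : NatTrans.IsMonoidal g) (hgs : g ∉ s) :
    g ∉ Submodule.span k s := by
  have := hs.fintype
  intro hspan
  obtain ⟨c, hc⟩ := Submodule.mem_span_iff_of_fintype.mp hspan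
  have hc0 : c = 0 := funext fun x => by
    refine (smul_eq_zero.mp (hg.smul_sub_eq_zero_of_sum_eq k hP (fun x : s => hsM x x.2) hli hc x))
      |>.resolve_right (sub_ne_zero.mpr ?_)
    rintro rfl
    exact hgs x.2
  exact hg.ne_zero (by simpa [hc0] using hc.symm)

theorem linearIndepOn_setOf_isMonoidal {P : C}
    (hP : ∀ X : C, ∃ (n : ℕ) (q : (⨁ fun _ : Fin n => P) ⟶ X), Epi q) :
    LinearIndepOn k id {g : F ⟶ F | NatTrans.IsMonoidal g} := by
  refine linearIndepOn_of_finite _ fun t ht htfin => ?_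
  induction t, htfin using Set.Finite.induction_on with
  | empty => exact linearIndepOn_empty k id
  | @insert g s hgs hs ih =>
    have hsM : s ⊆ {g | NatTrans.IsMonoidal g} := (Set.subset_insert g s).trans ht
    exact (linearIndepOn_id_insert hgs).mpr
      ⟨ih hsM, notMem_span_of_isMonoidal k hP hs hsM (ih hsM) (ht (Set.mem_insert g s)) hgs⟩

end Grouplike

end CategoryTheory

/-- Let `C` be a finite tensor category over an algebraically closed
field `k` and `F : C ⥤ C` a right exact `k`-linear strong monoidal functor. Then the
group `Aut_⊗(F)` of monoidal natural automorphisms of `F` is finite; in particular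
`Aut_⊗(id_C)` is finite. -/
theorem monoidalNatAut_finite
    (k : Type*) [Field k] [IsAlgClosed k]
    -- C is a finite tensor category over k:
    {C : Type*} [Category C] [Abelian C] [Linear k C]
    [MonoidalCategory C] [MonoidalPreadditive C] [MonoidalLinear k C]
    [RigidCategory C] [Simple (𝟙_ C)]
    [∀ X : C, IsNoetherianObject X] [∀ X : C, IsArtinianObject X]
    [∀ X Y : C, FiniteDimensional k (X ⟶ Y)]
    (P : C) [Projective P]
    (hP : ∀ X : C, ∃ (n : ℕ) (q : (⨁ fun _ : Fin n => P) ⟶ X), Epi q)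
    -- F is a right exact k-linear strong monoidal endofunctor:
    (F : C ⥤ C) [F.Monoidal] [F.Additive] [F.Linear k] [PreservesFiniteColimits F] :
    Finite {g : F ⟶ F // NatTrans.IsMonoidal g ∧ IsIso g} ∧
      Finite {g : 𝟭 C ⟶ 𝟭 C // NatTrans.IsMonoidal g ∧ IsIso g} := by
  have finite_monoidalAut (G : C ⥤ C) [G.Monoidal] [G.Additive] [G.PreservesEpimorphisms] :
      Finite {g : G ⟶ G // NatTrans.IsMonoidal g ∧ IsIso g} := by
    have := NatTrans.finiteDimensional k (F := G) (G := G) hP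
    have := (linearIndepOn_setOf_isMonoidal k (F := G) hP).finite
    exact (Set.finite_coe_iff.mp this |>.subset fun _ hg => hg.1).to_subtype
  exact ⟨finite_monoidalAut F, finite_monoidalAut (𝟭 C)⟩
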